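/- Under the same setting (M Hermitian positive definite, B = EᴴP⁻¹E with P Hermitian positive definite, A = [[M,E],[-Eᴴ,0]], G = I - τ B(ω₁,ω₂)†A with τ ≠ 0), null((B(ω₁,ω₂)†A)²) = null(B(ω₁,ω₂)†A), i.e., index(I - G) = 1. -/

import Mathlib

/-!
Write `y = (u, v) = B(ω₁,ω₂)† z`. Left multiplication by `[[M, ω₂E], [0, I]]` turns `B(ω₁,ω₂)†`
into `[[I, 0], [ω₁B†EᴴM⁻¹, B†]]`, so `B(ω₁,ω₂)† A y = 0` gives `Mu + Ev = 0` and `B†Eᴴu = 0`.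
Positive definiteness of `P` puts the columns of `Eᴴ` in the range of `B = EᴴP⁻¹E`, hence
`BB†Eᴴ = Eᴴ` and `Eᴴu = 0`; then `uᴴMu = 0`, so `u = 0`, `Ev = 0` and `Bv = 0`. Finally `v`
lies in the range of `B†`, on which `B†B` is the identity, so `v = 0`. Thus the range and the
null space of `B(ω₁,ω₂)† A` meet only in `0`.
-/

open Matrix
open scoped ComplexOrder

namespace Matrix

variable {R : Type*} [CommRing R] [PartialOrder R] [StarRing R] {m n : Type*} [Fintype m]
  [Fintype n]

theorem PosDef.eq_zero_of_dotProduct_mulVec_self_eq_zero {P : Matrix m m R} (hP : P.PosDef)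
    {x : m → R} (h : star x ⬝ᵥ (P *ᵥ x) = 0) : x = 0 := by
  by_contra hx
  exact (hP.dotProduct_mulVec_pos hx).ne' h

theorem PosDef.mul_eq_zero_of_conjTranspose_mul_mul_same_mul_eq_zero {P : Matrix m m R}
    (hP : P.PosDef) {k : Type*} [Fintype k] {E : Matrix m n R} {X : Matrix n k R}
    (h : Eᴴ * P * E * X = 0) : E * X = 0 := by
  refine ext_iff_mulVec.mpr fun w => ?_
  refine (hP.eq_zero_of_dotProduct_mulVec_self_eq_zero ?_).trans (zero_mulVec w).symm
  have hgram : (E * X)ᴴ * P * (E * X) = Xᴴ * (Eᴴ * P * E * X) := by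
    simp only [conjTranspose_mul, Matrix.mul_assoc]
  rw [star_mulVec, ← dotProduct_mulVec, mulVec_mulVec, mulVec_mulVec, hgram, h, Matrix.mul_zero,
    zero_mulVec, dotProduct_zero]

theorem PosDef.mul_mul_eq_self_of_conjTranspose_mul_mul_same [DecidableEq n] {P : Matrix m m R}
    (hP : P.PosDef) {E : Matrix m n R} {B Bd : Matrix n n R} (hB : B = Eᴴ * P * E)
    (h1 : B * Bd * B = B) : E * Bd * B = E := by
  have hB0 : Eᴴ * P * E * (1 - Bd * B) = 0 := by
    rw [← hB, Matrix.mul_sub, Matrix.mul_one, ← Matrix.mul_assoc, h1, sub_self]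
  have hE0 := hP.mul_eq_zero_of_conjTranspose_mul_mul_same_mul_eq_zero hB0
  rw [Matrix.mul_sub, Matrix.mul_one, sub_eq_zero] at hE0
  rw [Matrix.mul_assoc, ← hE0]

theorem PosDef.mul_mul_conjTranspose_eq_self [DecidableEq n] {P : Matrix m m R} (hP : P.PosDef)
    {E : Matrix m n R} {B Bd : Matrix n n R} (hB : B = Eᴴ * P * E) (h1 : B * Bd * B = B) :
    B * Bd * Eᴴ = Eᴴ := by
  have hBH : Bᴴ = B := hB ▸ isHermitian_conjTranspose_mul_mul E hP.isHermitian
  have hrange : Eᴴ = B * (Bdᴴ * Eᴴ) := by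
    conv_lhs => rw [← hP.mul_mul_eq_self_of_conjTranspose_mul_mul_same hB h1]
    rw [conjTranspose_mul, conjTranspose_mul, hBH]
  calc B * Bd * Eᴴ = B * Bd * B * (Bdᴴ * Eᴴ) := by
        conv_lhs => rw [hrange]
        simp only [Matrix.mul_assoc]
    _ = Eᴴ := by rw [h1, ← hrange]

theorem PosDef.eq_zero_of_mulVec_add_mulVec_eq_zero {M : Matrix m m R} (hM : M.PosDef)
    {E : Matrix m n R} {u : m → R} {v : n → R} (hEu : Eᴴ *ᵥ u = 0)
    (h : M *ᵥ u + E *ᵥ v = 0) : u = 0 := by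
  refine hM.eq_zero_of_dotProduct_mulVec_self_eq_zero ?_
  calc star u ⬝ᵥ (M *ᵥ u) = star u ⬝ᵥ (M *ᵥ u + E *ᵥ v) - star (Eᴴ *ᵥ u) ⬝ᵥ v := by
        rw [dotProduct_add, star_mulVec, conjTranspose_conjTranspose, ← dotProduct_mulVec,
          add_sub_cancel_right]
    _ = 0 := by rw [h, hEu, dotProduct_zero, star_zero, zero_dotProduct, sub_zero]

end Matrix

section SaddlePoint

variable {R : Type*} [CommRing R] [StarRing R] {m n : Type*} [Fintype m] [Fintype n]

def saddlePointMatrix (M : Matrix m m R) (E : Matrix m n R) : Matrix (m ⊕ n) (m ⊕ n) R :=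
  fromBlocks M E (-Eᴴ) 0

theorem saddlePointMatrix_mulVec_sumElim (M : Matrix m m R) (E : Matrix m n R) (u : m → R)
    (v : n → R) :
    saddlePointMatrix M E *ᵥ Sum.elim u v = Sum.elim (M *ᵥ u + E *ᵥ v) (-(Eᴴ *ᵥ u)) := by
  rw [saddlePointMatrix, fromBlocks_mulVec, Sum.elim_comp_inl, Sum.elim_comp_inr, zero_mulVec,
    add_zero, neg_mulVec]

variable [DecidableEq m]

/-- The Moore–Penrose inverse `B(ω₁, ω₂)†` of the preconditioner, written in terms of
`Bd = B†`. -/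
noncomputable def preconditionerPinv (M : Matrix m m R) (E : Matrix m n R) (Bd : Matrix n n R)
    (ω₁ ω₂ : R) : Matrix (m ⊕ n) (m ⊕ n) R :=
  fromBlocks (M⁻¹ - (ω₁ * ω₂) • (M⁻¹ * E * Bd * Eᴴ * M⁻¹)) (-(ω₂ • (M⁻¹ * E * Bd)))
    (ω₁ • (Bd * Eᴴ * M⁻¹)) Bd

theorem preconditionerPinv_mulVec_sumElim_inr (M : Matrix m m R) (E : Matrix m n R)
    (Bd : Matrix n n R) (ω₁ ω₂ : R) (a : m → R) (b : n → R) :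
    (preconditionerPinv M E Bd ω₁ ω₂ *ᵥ Sum.elim a b) ∘ Sum.inr =
      Bd *ᵥ (ω₁ • ((Eᴴ * M⁻¹) *ᵥ a) + b) := by
  rw [preconditionerPinv, fromBlocks_mulVec, Sum.elim_comp_inr, Sum.elim_comp_inl,
    Sum.elim_comp_inr, mulVec_add, mulVec_smul, smul_mulVec, mulVec_mulVec, Matrix.mul_assoc]

variable [DecidableEq n]

theorem fromBlocks_mul_preconditionerPinv {M : Matrix m m R} (hM : IsUnit M.det)
    (E : Matrix m n R) (Bd : Matrix n n R) (ω₁ ω₂ : R) :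
    fromBlocks M (ω₂ • E) 0 1 * preconditionerPinv M E Bd ω₁ ω₂ =
      fromBlocks 1 0 (ω₁ • (Bd * Eᴴ * M⁻¹)) Bd := by
  simp only [preconditionerPinv, fromBlocks_multiply, Matrix.mul_sub, Matrix.mul_smul,
    Matrix.smul_mul, Matrix.mul_neg, Matrix.zero_mul, Matrix.one_mul, mul_nonsing_inv M hM,
    Matrix.mul_assoc, mul_nonsing_inv_cancel_left M _ hM, smul_smul]
  congr 1 <;> module

theorem eq_zero_and_mulVec_eq_zero_of_preconditionerPinv_mulVec_eq_zero {M : Matrix m m R}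
    (hM : IsUnit M.det) {E : Matrix m n R} {Bd : Matrix n n R} {ω₁ ω₂ : R} {a : m → R}
    {b : n → R} (h : preconditionerPinv M E Bd ω₁ ω₂ *ᵥ Sum.elim a b = 0) :
    a = 0 ∧ Bd *ᵥ b = 0 := by
  have h' := congrArg ((fromBlocks M (ω₂ • E) 0 1 : Matrix (m ⊕ n) (m ⊕ n) R) *ᵥ ·) h
  rw [mulVec_mulVec, fromBlocks_mul_preconditionerPinv hM, fromBlocks_mulVec, Sum.elim_comp_inl,
    Sum.elim_comp_inr, one_mulVec, zero_mulVec, add_zero, mulVec_zero, ← Sum.elim_zero_zero,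
    Sum.elim_eq_iff] at h'
  obtain ⟨rfl, hb⟩ := h'
  simpa using hb

end SaddlePoint

theorem eq_zero_of_mem_range_of_preconditionerPinv_mul_saddlePointMatrix_mulVec_eq_zero
    {K : Type*} [Field K] [StarRing K] [PartialOrder K] {m n : Type*} [Fintype m] [Fintype n]
    [DecidableEq m] [DecidableEq n] {M P : Matrix m m K} (hM : M.PosDef) (hP : P.PosDef)
    {E : Matrix m n K}
    {B Bd : Matrix n n K} (hB : B = Eᴴ * P * E) (h1 : B * Bd * B = B) (h2 : Bd * B * Bd = Bd)
    {ω₁ ω₂ : K} {y : m ⊕ n → K} (hy : y ∈ Set.range (preconditionerPinv M E Bd ω₁ ω₂).mulVec)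
    (h : (preconditionerPinv M E Bd ω₁ ω₂ * saddlePointMatrix M E) *ᵥ y = 0) : y = 0 := by
  obtain ⟨w, rfl⟩ := hy
  obtain ⟨c, d, rfl⟩ : ∃ c d, w = Sum.elim c d := ⟨_, _, (Sum.elim_comp_inl_inr w).symm⟩
  obtain ⟨u, v, hy_uv⟩ : ∃ u v, preconditionerPinv M E Bd ω₁ ω₂ *ᵥ Sum.elim c d = Sum.elim u v :=
    ⟨_, _, (Sum.elim_comp_inl_inr _).symm⟩
  rw [hy_uv, ← mulVec_mulVec, saddlePointMatrix_mulVec_sumElim] at h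
  obtain ⟨hMuEv, hBdEu⟩ := eq_zero_and_mulVec_eq_zero_of_preconditionerPinv_mulVec_eq_zero
    ((isUnit_iff_isUnit_det M).mp hM.isUnit) h
  have hEu : Eᴴ *ᵥ u = 0 := by
    rw [mulVec_neg, neg_eq_zero] at hBdEu
    rw [← hP.mul_mul_conjTranspose_eq_self hB h1, ← mulVec_mulVec, ← mulVec_mulVec, hBdEu,
      mulVec_zero]
  have hu : u = 0 := hM.eq_zero_of_mulVec_add_mulVec_eq_zero hEu hMuEv
  have hBv : B *ᵥ v = 0 := by
    rw [hu, mulVec_zero, zero_add] at hMuEv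
    rw [hB, ← mulVec_mulVec, hMuEv, mulVec_zero]
  have hv_range : v = Bd *ᵥ (ω₁ • ((Eᴴ * M⁻¹) *ᵥ c) + d) := by
    rw [← preconditionerPinv_mulVec_sumElim_inr M E Bd ω₁ ω₂, hy_uv, Sum.elim_comp_inr]
  have hv : v = 0 := by
    calc v = (Bd * B * Bd) *ᵥ (ω₁ • ((Eᴴ * M⁻¹) *ᵥ c) + d) := by rw [h2, hv_range]
      _ = Bd *ᵥ (B *ᵥ v) := by rw [hv_range, mulVec_mulVec, mulVec_mulVec]
      _ = 0 := by rw [hBv, mulVec_zero]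
  rw [hy_uv, hu, hv, Sum.elim_zero_zero]

theorem stmt10_general {p q : ℕ} (M P : Matrix (Fin p) (Fin p) ℂ)
    (hM : M.PosDef) (hP : P.PosDef)
    (E : Matrix (Fin p) (Fin q) ℂ) (ω₁ ω₂ : ℂ)
    (B Bd : Matrix (Fin q) (Fin q) ℂ) (hB : B = Eᴴ * P⁻¹ * E)
    (h1 : B * Bd * B = B) (h2 : Bd * B * Bd = Bd) :
    let A : Matrix (Fin p ⊕ Fin q) (Fin p ⊕ Fin q) ℂ := fromBlocks M E (-Eᴴ) 0
    let Bwd : Matrix (Fin p ⊕ Fin q) (Fin p ⊕ Fin q) ℂ :=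
      fromBlocks (M⁻¹ - (ω₁ * ω₂) • (M⁻¹ * E * Bd * Eᴴ * M⁻¹)) (-(ω₂ • (M⁻¹ * E * Bd)))
        (ω₁ • (Bd * Eᴴ * M⁻¹)) Bd
    {x : Fin p ⊕ Fin q → ℂ | ((Bwd * A) * (Bwd * A)).mulVec x = 0} =
      {x : Fin p ⊕ Fin q → ℂ | (Bwd * A).mulVec x = 0} := by
  intro A Bwd
  ext x
  rw [Set.mem_ofPred_eq, Set.mem_ofPred_eq, ← mulVec_mulVec]
  refine ⟨fun h => ?_, fun h => by rw [h, mulVec_zero]⟩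
  exact eq_zero_of_mem_range_of_preconditionerPinv_mul_saddlePointMatrix_mulVec_eq_zero hM hP.inv
    hB h1 h2 ⟨A *ᵥ x, mulVec_mulVec _ _ _⟩ h

theorem stmt10 {p q : ℕ} (M P : Matrix (Fin p) (Fin p) ℂ)
    (hM : M.PosDef) (hP : P.PosDef)
    (E : Matrix (Fin p) (Fin q) ℂ) (ω₁ ω₂ τ : ℂ) (hτ : τ ≠ 0)
    (B Bd : Matrix (Fin q) (Fin q) ℂ) (hB : B = Eᴴ * P⁻¹ * E)
    (h1 : B * Bd * B = B) (h2 : Bd * B * Bd = Bd)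
    (h3 : (B * Bd)ᴴ = B * Bd) (h4 : (Bd * B)ᴴ = Bd * B) :
    let A : Matrix (Fin p ⊕ Fin q) (Fin p ⊕ Fin q) ℂ := fromBlocks M E (-Eᴴ) 0
    let Bwd : Matrix (Fin p ⊕ Fin q) (Fin p ⊕ Fin q) ℂ :=
      fromBlocks (M⁻¹ - (ω₁ * ω₂) • (M⁻¹ * E * Bd * Eᴴ * M⁻¹)) (-(ω₂ • (M⁻¹ * E * Bd)))
        (ω₁ • (Bd * Eᴴ * M⁻¹)) Bd
    {x : Fin p ⊕ Fin q → ℂ | ((Bwd * A) * (Bwd * A)).mulVec x = 0} =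
      {x : Fin p ⊕ Fin q → ℂ | (Bwd * A).mulVec x = 0} :=
  stmt10_general M P hM hP E ω₁ ω₂ B Bd hB h1 h2
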